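/- (Elezović summation formula) For every integer k ≥ 1, B_k / k! = Σ_{n=1}^{k} (−1)^{n+k} Σ_{k_1+⋯+k_n = k, k_i ≥ 1} (1/n!) · (B_{k_1}/(k_1·k_1!)) ⋯ (B_{k_n}/(k_n·k_n!)). -/

import Mathlib

/-!
Let `G(x) = ∑_{j ≥ 1} B_j x^j / (j · j!)`. Then `x G'(x) = B(x) - 1`, where
`B(x) = x / (e^x - 1)` generates the `B_j / j!`, so `exp(-G)` and `x + B(x) = B(-x)`, the
generating function of the `bernoulli' j / j!`, solve the same linear equation `y' = -G' y`
with `y(0) = 1` and are equal. Expanding `exp(-G) = ∑ (-G)^n / n!`, the coefficient of `x^k`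
in `G^n` is a sum over the compositions of `k` into `n` parts, and the sign `(-1)^k` compares
the coefficients of `B(-x)` and `B(x)`.
-/

open Finset PowerSeries

namespace Composition

def cons {i j k : ℕ} (hi : 0 < i) (h : i + j = k) (c : Composition j) : Composition k where
  blocks := i :: c.blocks
  blocks_pos := by
    rintro b (_ | ⟨_, hb⟩)
    exacts [hi, c.blocks_pos hb]
  blocks_sum := by rw [List.sum_cons, c.blocks_sum, h]

@[simp]
theorem cons_blocks {i j k : ℕ} (hi : 0 < i) (h : i + j = k) (c : Composition j) :
    (cons hi h c).blocks = i :: c.blocks := rfl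

@[simp]
theorem length_cons {i j k : ℕ} (hi : 0 < i) (h : i + j = k) (c : Composition j) :
    (cons hi h c).length = c.length + 1 := List.length_cons

theorem exists_eq_cons {k : ℕ} (c : Composition k) (hc : c.length ≠ 0) :
    ∃ i j, ∃ (hi : 0 < i) (h : i + j = k) (c' : Composition j), c = cons hi h c' := by
  obtain ⟨i, l, hl⟩ := List.exists_cons_of_length_pos (Nat.pos_of_ne_zero hc)
  have hk : i + l.sum = k := by rw [← c.blocks_sum, hl, List.sum_cons]
  exact ⟨i, l.sum, c.blocks_pos (by simp [hl]), hk,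
    ⟨l, fun hb => c.blocks_pos (by simp [hl, hb]), rfl⟩, Composition.ext hl⟩

end Composition

namespace PowerSeries

theorem coeff_subst_eq_sum_range {R : Type*} [CommRing R] {a : R⟦X⟧}
    (ha : constantCoeff a = 0) (f : R⟦X⟧) (k : ℕ) :
    coeff k (f.subst a) = ∑ n ∈ range (k + 1), coeff n f * coeff k (a ^ n) := by
  rw [coeff_subst' (HasSubst.of_constantCoeff_zero' ha)]
  refine finsum_eq_sum_of_support_subset _ fun n hn => ?_
  by_contra hnk
  refine hn ?_
  dsimp only
  rw [coeff_of_lt_order k ((Nat.cast_lt.mpr (by simpa using hnk)).trans_le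
    (le_order_pow_of_constantCoeff_eq_zero n ha)), smul_zero]

theorem eq_of_derivative_eq_mul {R : Type*} [CommRing R] [IsAddTorsionFree R]
    {u p q : R⟦X⟧} (hp : d⁄dX R p = u * p) (hq : d⁄dX R q = u * q)
    (h0 : constantCoeff p = constantCoeff q) : p = q := by
  rw [← sub_eq_zero]
  have hr : d⁄dX R (p - q) = u * (p - q) := by rw [map_sub, hp, hq, mul_sub]
  ext k
  induction k using Nat.strong_induction_on with
  | _ k ih =>
    rcases k with _ | k
    · simpa [sub_eq_zero] using h0
    have hk : coeff (k + 1) (p - q) * (k + 1) = 0 := by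
      rw [← coeff_derivative, hr, coeff_mul]
      refine sum_eq_zero fun x hx => ?_
      rw [ih x.2 (by have := mem_antidiagonal.mp hx; omega), map_zero, mul_zero]
    rw [mul_comm, ← Nat.cast_succ, ← nsmul_eq_mul, smul_eq_zero] at hk
    simpa using hk

theorem coeff_mk_pow {R : Type*} [CommSemiring R] {f : ℕ → R} (hf : f 0 = 0) (n k : ℕ) :
    coeff k (mk f ^ n) = ∑ c : Composition k with c.length = n, (c.blocks.map f).prod := by
  induction n generalizing k with
  | zero =>
    rcases k with _ | k
    · have (c : Composition 0) : c.blocks = [] := c.blocks_eq_nil.mpr rfl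
      simp [this, composition_card]
    · have (c : Composition (k + 1)) : c.length ≠ 0 := (c.length_pos_iff.mpr k.succ_pos).ne'
      simp [coeff_one, this]
  | succ n ih =>
    simp only [pow_succ', coeff_mul, coeff_mk, ih, mul_sum]
    rw [sum_sigma']
    refine sum_bij_ne_zero (fun x hx hx0 => Composition.cons
      (Nat.pos_of_ne_zero fun h0 => hx0 (by rw [h0, hf, zero_mul]))
      (mem_antidiagonal.mp (mem_sigma.mp hx).1) x.2) ?_ ?_ ?_ ?_
    · intro x hx _
      simpa using (mem_sigma.mp hx).2
    · rintro ⟨⟨i, j⟩, c⟩ _ _ ⟨⟨i', j'⟩, c'⟩ _ _ hcc'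
      have hb := congrArg Composition.blocks hcc'
      simp only [Composition.cons_blocks, List.cons.injEq] at hb
      obtain ⟨rfl, hb⟩ := hb
      obtain rfl : j = j' := c.blocks_sum.symm.trans (hb ▸ c'.blocks_sum)
      rw [Composition.ext hb]
    · intro c hc hc0
      replace hc : c.length = n + 1 := (mem_filter.mp hc).2
      obtain ⟨i, j, hi, h, c', rfl⟩ := c.exists_eq_cons (by rw [hc]; exact n.succ_ne_zero)
      refine ⟨⟨(i, j), c'⟩, ?_, hc0, rfl⟩
      simpa [h] using hc
    · intro x _ _
      simp

end PowerSeries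

theorem bernoulli'PowerSeries_eq_X_add_bernoulliPowerSeries (A : Type*) [CommRing A]
    [Algebra ℚ A] : bernoulli'PowerSeries A = X + bernoulliPowerSeries A := by
  ext (_ | _ | k)
  · simp [bernoulli'PowerSeries, bernoulliPowerSeries]
  · have : (1 / 2 : ℚ) = 1 + -1 / 2 := by norm_num
    simp [bernoulli'PowerSeries, bernoulliPowerSeries, coeff_X, this]
  · simp [bernoulli'PowerSeries, bernoulliPowerSeries, coeff_X, bernoulli_eq_bernoulli'_of_ne_one]

theorem X_mul_derivative_bernoulliPowerSeries (A : Type*) [CommRing A] [Algebra ℚ A] :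
    X * d⁄dX A (bernoulliPowerSeries A)
      = bernoulliPowerSeries A - X * bernoulliPowerSeries A - bernoulliPowerSeries A ^ 2 := by
  have h := bernoulliPowerSeries_mul_exp_sub_one A
  have hd := congrArg (d⁄dX A) h
  rw [Derivation.leibniz, map_sub, derivative_exp, Derivation.map_one_eq_zero, derivative_X,
    smul_eq_mul, smul_eq_mul, sub_zero] at hd
  linear_combination bernoulliPowerSeries A * hd
    - (d⁄dX A (bernoulliPowerSeries A) + bernoulliPowerSeries A) * h

-- At `j = 0` the denominator is `0`, so the constant coefficient is `0`.
noncomputable def bernoulliLogSeries : ℚ⟦X⟧ :=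
  mk fun j => bernoulli j / (j * j.factorial)

theorem constantCoeff_neg_bernoulliLogSeries : constantCoeff (-bernoulliLogSeries) = 0 := by
  rw [map_neg, ← coeff_zero_eq_constantCoeff_apply, bernoulliLogSeries, coeff_mk]
  simp

theorem X_mul_derivative_bernoulliLogSeries :
    X * d⁄dX ℚ bernoulliLogSeries = bernoulliPowerSeries ℚ - 1 := by
  ext (_ | j)
  · simp [bernoulliPowerSeries]
  · rw [coeff_succ_X_mul, coeff_derivative, map_sub, coeff_one, if_neg j.succ_ne_zero]
    simp only [bernoulliLogSeries, bernoulliPowerSeries, coeff_mk, Algebra.algebraMap_self,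
      RingHom.id_apply, sub_zero, Nat.factorial_succ]
    push_cast
    field_simp

theorem derivative_bernoulli'PowerSeries :
    d⁄dX ℚ (bernoulli'PowerSeries ℚ)
      = -d⁄dX ℚ bernoulliLogSeries * bernoulli'PowerSeries ℚ := by
  refine mul_left_cancel₀ (X_ne_zero (R := ℚ)) ?_
  rw [bernoulli'PowerSeries_eq_X_add_bernoulliPowerSeries, map_add, derivative_X]
  linear_combination X_mul_derivative_bernoulliPowerSeries ℚ
    + (X + bernoulliPowerSeries ℚ) * X_mul_derivative_bernoulliLogSeries

theorem exp_subst_neg_bernoulliLogSeries :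
    (exp ℚ).subst (-bernoulliLogSeries) = bernoulli'PowerSeries ℚ := by
  refine eq_of_derivative_eq_mul (u := -d⁄dX ℚ bernoulliLogSeries) ?_
    derivative_bernoulli'PowerSeries ?_
  · rw [derivative_subst (.of_constantCoeff_zero' constantCoeff_neg_bernoulliLogSeries),
      derivative_exp, map_neg, mul_comm]
  · rw [← coeff_zero_eq_constantCoeff_apply,
      coeff_subst_eq_sum_range constantCoeff_neg_bernoulliLogSeries]
    simp [bernoulli'PowerSeries]

theorem coeff_exp_subst_neg_bernoulliLogSeries (k : ℕ) :
    coeff k ((exp ℚ).subst (-bernoulliLogSeries)) = ∑ c : Composition k,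
      (-1) ^ c.length / c.length.factorial *
        (c.blocks.map fun j : ℕ => bernoulli j / (j * j.factorial)).prod := by
  rw [coeff_subst_eq_sum_range constantCoeff_neg_bernoulliLogSeries,
    ← sum_fiberwise_of_maps_to (g := Composition.length)
      fun c _ => mem_range.mpr (Nat.lt_succ_of_le c.length_le)]
  refine sum_congr rfl fun n _ => ?_
  rw [neg_pow, ← map_one (C (R := ℚ)), ← map_neg, ← map_pow, coeff_C_mul, bernoulliLogSeries,
    coeff_mk_pow (by simp), mul_sum, mul_sum]
  refine sum_congr rfl fun c hc => ?_
  rw [(mem_filter.mp hc).2, coeff_exp, Algebra.algebraMap_self, RingHom.id_apply]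
  ring

theorem stmt9_general (k : ℕ) :
    bernoulli k / (k.factorial : ℚ)
      = ∑ c : Composition k,
          (-1 : ℚ) ^ (c.length + k) * (1 / (c.length.factorial : ℚ)) *
            (c.blocks.map (fun j : ℕ => bernoulli j / ((j : ℚ) * (j.factorial : ℚ)))).prod := by
  calc bernoulli k / (k.factorial : ℚ)
    _ = (-1) ^ k * coeff k (bernoulli'PowerSeries ℚ) := by
      rw [bernoulli'PowerSeries, coeff_mk, Algebra.algebraMap_self, RingHom.id_apply,
        bernoulli'_eq_bernoulli, mul_div_assoc, ← mul_assoc, ← mul_pow, neg_one_mul, neg_neg,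
        one_pow, one_mul]
    _ = _ := by
      rw [← exp_subst_neg_bernoulliLogSeries, coeff_exp_subst_neg_bernoulliLogSeries, mul_sum]
      exact sum_congr rfl fun c _ => by ring

/-- Elezović summation formula: for every k ≥ 1,
B_k/k! = Σ_{n=1}^{k} (−1)^{n+k} Σ_{k₁+⋯+kₙ=k, kᵢ≥1} (1/n!) ∏ B_{kᵢ}/(kᵢ·kᵢ!).
The double sum is expressed as a single sum over all compositions of k,
with n = the length of the composition. -/
theorem stmt9 (k : ℕ) (hk : 1 ≤ k) :
    bernoulli k / (k.factorial : ℚ)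
      = ∑ c : Composition k,
          (-1 : ℚ) ^ (c.length + k) * (1 / (c.length.factorial : ℚ)) *
            (c.blocks.map (fun j : ℕ => bernoulli j / ((j : ℚ) * (j.factorial : ℚ)))).prod :=
  stmt9_general k
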